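/- arXiv:1212.5966 — 2 statements merged into one kernel-verified Lean document; each statement's English description precedes it below -/
import Mathlib

section
/- Let n ≥ 2, R > 0, and let g : [−1,1] → ℝ be continuous. For x, y ∈ ℝ^n define F(x,y) = ∫_{B_R(x) ∩ B_R(y)} g(⟨(x−z)/|x−z|, (y−z)/|y−z|⟩) dz. Then for every y ∈ ℝ^n, ∫_{ℝ^n} F(x,y) dx = vol(B_R^n)² · ḡ, where vol(B_R^n) is the volume of a ball of radius R in ℝ^n and ḡ = ∫_{−1}^{1} g(t)(1−t²)^{(n−3)/2} dt / ∫_{−1}^{1} (1−t²)^{(n−3)/2} dt. -/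
open MeasureTheory Metric Real
open scoped BigOperators

/-- The average `ḡ` of `g` with respect to the measure `(1 - t²)^((n-3)/2) dt` on `[-1,1]`. -/
noncomputable def sphereAvg (n : ℕ) (g : ℝ → ℝ) : ℝ :=
  (∫ t in (-1 : ℝ)..1, g t * (1 - t ^ 2) ^ (((n : ℝ) - 3) / 2)) /
    (∫ t in (-1 : ℝ)..1, (1 - t ^ 2) ^ (((n : ℝ) - 3) / 2))

/-!
By Fubini, `∫ F(x,y) dx = ∫_{z ∈ B_R(y)} ∫_{u ∈ B_R(0)} g ⟪u/|u|, (y-z)/|y-z|⟫ du dz`, and by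
rotation invariance the inner integral `J` does not depend on the unit vector `(y-z)/|y-z|`, so
the left side is `vol(B_R) · J`. Writing `u = (t, v) ∈ ℝ × ℝ^{n-1}`, integrating radially in `v`
and then in polar coordinates `(t, |v|) = ρ (cos θ, sin θ)` gives
`J = c · ∫₀^π sin^{n-2} θ g(cos θ) dθ` with `c` independent of `g`. Taking `g = 1` shows
`vol(B_R) = c · ∫₀^π sin^{n-2} θ dθ`, and the substitution `t = cos θ` identifies the ratio of the
two `θ`-integrals with `ḡ`.
-/

open Set

lemma Real.cos_image_Ioo_zero_pi : cos '' Ioo 0 π = Ioo (-1) 1 := by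
  rw [continuousOn_cos.image_Ioo_of_strictAntiOn pi_pos.le strictAntiOn_cos, cos_pi, cos_zero]

lemma integral_Ioo_neg_one_one_eq_integral_sin_mul (h : ℝ → ℝ) :
    ∫ t in Ioo (-1) 1, h t = ∫ θ in Ioo 0 π, sin θ * h (cos θ) := by
  rw [← cos_image_Ioo_zero_pi, integral_image_eq_integral_abs_deriv_smul measurableSet_Ioo
    (fun θ _ => (hasDerivAt_cos θ).hasDerivWithinAt) (injOn_cos.mono Ioo_subset_Icc_self)]
  refine setIntegral_congr_fun measurableSet_Ioo fun θ hθ => ?_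
  rw [abs_neg, abs_of_pos (sin_pos_of_pos_of_lt_pi hθ.1 hθ.2), smul_eq_mul]

lemma integral_mul_one_sub_sq_rpow_eq_integral_sin_pow_mul (k : ℕ) (G : ℝ → ℝ) :
    ∫ t in (-1)..1, G t * (1 - t ^ 2) ^ (((k : ℝ) - 1) / 2) =
      ∫ θ in 0..π, sin θ ^ k * G (cos θ) := by
  rw [intervalIntegral.integral_of_le (by norm_num), intervalIntegral.integral_of_le pi_pos.le,
    integral_Ioc_eq_integral_Ioo, integral_Ioc_eq_integral_Ioo,
    integral_Ioo_neg_one_one_eq_integral_sin_mul]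
  refine setIntegral_congr_fun measurableSet_Ioo fun θ hθ => ?_
  have hsin : 0 < sin θ := sin_pos_of_pos_of_lt_pi hθ.1 hθ.2
  have hpow : sin θ * (sin θ ^ 2) ^ (((k : ℝ) - 1) / 2) = sin θ ^ k := by
    rw [← rpow_natCast, ← rpow_natCast, ← rpow_mul hsin.le]
    nth_rw 1 [← rpow_one (sin θ)]
    rw [← rpow_add hsin]
    ring_nf
  rw [← sin_sq, ← hpow]
  ring

lemma sphereAvg_add_two (k : ℕ) (g : ℝ → ℝ) :
    sphereAvg (k + 2) g = (∫ θ in 0..π, sin θ ^ k * g (cos θ)) / ∫ θ in 0..π, sin θ ^ k := by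
  have hexp : (k : ℝ) + 2 - 3 = k - 1 := by ring
  simpa [sphereAvg, hexp] using congr_arg₂ (· / ·)
    (integral_mul_one_sub_sq_rpow_eq_integral_sin_pow_mul k g)
    (integral_mul_one_sub_sq_rpow_eq_integral_sin_pow_mul k fun _ => 1)

lemma integrable_of_norm_le_of_forall_notMem_eq_zero {α E : Type*} [MeasurableSpace α]
    [NormedAddCommGroup E] {μ : Measure α} {f : α → E} {s : Set α} {C : ℝ}
    (hs : MeasurableSet s) (hμs : μ s ≠ ⊤) (hf : AEStronglyMeasurable f μ)
    (hC : ∀ x ∈ s, ‖f x‖ ≤ C) (h0 : ∀ x ∉ s, f x = 0) : Integrable f μ :=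
  (Measure.integrableOn_of_bounded hμs hf ((ae_restrict_iff' hs).2 (ae_of_all _ hC))
    ).integrable_of_forall_notMem_eq_zero h0

lemma Prod.norm_le_sqrt_sq_add_sq {E F : Type*} [SeminormedAddCommGroup E]
    [SeminormedAddCommGroup F] (p : E × F) : ‖p‖ ≤ √(‖p.1‖ ^ 2 + ‖p.2‖ ^ 2) := by
  rw [Prod.norm_def]
  refine max_le ?_ ?_ <;> refine (le_abs_self _).trans (abs_le_sqrt ?_) <;>
    nlinarith [sq_nonneg ‖p.1‖, sq_nonneg ‖p.2‖]

lemma integral_comp_norm_inner_eq_of_norm_eq {E : Type*} [NormedAddCommGroup E]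
    [InnerProductSpace ℝ E] [FiniteDimensional ℝ E] [MeasurableSpace E] [BorelSpace E]
    (Φ : ℝ → ℝ → ℝ) {v w : E} (h : ‖v‖ = ‖w‖) :
    ∫ u, Φ ‖u‖ (inner ℝ u v) = ∫ u, Φ ‖u‖ (inner ℝ u w) := by
  let T := Submodule.reflection (ℝ ∙ (v - w))ᗮ
  have hTv : T v = w := Submodule.reflection_sub h
  calc ∫ u, Φ ‖u‖ (inner ℝ u v) = ∫ u, Φ ‖T u‖ (inner ℝ (T u) w) := by
        simp only [← hTv, LinearIsometryEquiv.norm_map, LinearIsometryEquiv.inner_map_map]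
    _ = ∫ u, Φ ‖u‖ (inner ℝ u w) :=
        T.measurePreserving.integral_comp T.toHomeomorph.measurableEmbedding
          fun u => Φ ‖u‖ (inner ℝ u w)

lemma EuclideanSpace.integral_comp_norm_apply_zero (k : ℕ) (f : ℝ → ℝ → ℝ) :
    ∫ u : EuclideanSpace ℝ (Fin (k + 1)), f ‖u‖ (u 0) =
      ∫ p : ℝ × EuclideanSpace ℝ (Fin k), f √(p.1 ^ 2 + ‖p.2‖ ^ 2) p.1 := by
  let e : ℝ × EuclideanSpace ℝ (Fin k) ≃ᵐ EuclideanSpace ℝ (Fin (k + 1)) :=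
    ((MeasurableEquiv.refl ℝ).prodCongr (MeasurableEquiv.toLp 2 _).symm).trans
      ((MeasurableEquiv.piFinSuccAbove (fun _ => ℝ) 0).symm.trans (MeasurableEquiv.toLp 2 _))
  have he : MeasurePreserving e := by
    rw [Measure.volume_eq_prod]
    refine ((MeasurePreserving.id volume).prod (PiLp.volume_preserving_ofLp _)).trans ?_
    refine MeasurePreserving.trans ?_ (PiLp.volume_preserving_toLp _)
    rw [volume_pi, volume_pi]
    exact (measurePreserving_piFinSuccAbove (fun _ => volume) 0).symm
  rw [← he.integral_comp' (fun u => f ‖u‖ (u 0))]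
  congr 1 with p
  have h0 : e p 0 = p.1 := by
    simp [e, MeasurableEquiv.piFinSuccAbove, MeasurableEquiv.prodCongr]
  have hnorm : ‖e p‖ = √(p.1 ^ 2 + ‖p.2‖ ^ 2) := by
    rw [EuclideanSpace.norm_eq, EuclideanSpace.norm_eq, Fin.sum_univ_succ,
      sq_sqrt (by positivity)]
    simp [e, MeasurableEquiv.piFinSuccAbove, MeasurableEquiv.prodCongr]
  rw [h0, hnorm]

lemma integral_prod_comp_norm_snd {F : Type*} [NormedAddCommGroup F] [NormedSpace ℝ F]
    [FiniteDimensional ℝ F] [MeasurableSpace F] [BorelSpace F] [Nontrivial F] (μ : Measure F)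
    [μ.IsAddHaarMeasure] (h : ℝ → ℝ → ℝ)
    (hint : Integrable (fun p : ℝ × F => h p.1 ‖p.2‖) (volume.prod μ)) :
    ∫ p, h p.1 ‖p.2‖ ∂(volume.prod μ) = Module.finrank ℝ F * μ.real (ball 0 1) *
      ∫ t, ∫ r in Ioi 0, r ^ (Module.finrank ℝ F - 1) * h t r := by
  rw [integral_prod _ hint, ← integral_const_mul]
  congr 1 with t
  rw [integral_fun_norm_addHaar μ (h t), nsmul_eq_mul, smul_eq_mul, mul_assoc]
  rfl

/-- `ballKernel R G ‖u‖ ⟪u, w⟫` is `G ⟪‖u‖⁻¹ • u, w⟫` on the ball `‖u‖ ≤ R` and `0` outside it. -/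
noncomputable def ballKernel (R : ℝ) (G : ℝ → ℝ) (ρ s : ℝ) : ℝ :=
  if ρ ≤ R then G (ρ⁻¹ * s) else 0

section ballKernel

variable {R C : ℝ} {G : ℝ → ℝ}

lemma norm_ballKernel_le (hC : ∀ t, ‖G t‖ ≤ C) (ρ s : ℝ) : ‖ballKernel R G ρ s‖ ≤ C := by
  unfold ballKernel
  split_ifs
  · exact hC _
  · simpa using (norm_nonneg _).trans (hC 0)

lemma ballKernel_of_lt {ρ : ℝ} (h : R < ρ) (s : ℝ) : ballKernel R G ρ s = 0 :=
  if_neg h.not_ge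

lemma measurable_ballKernel (hG : Measurable G) :
    Measurable (Function.uncurry (ballKernel R G)) :=
  Measurable.ite (measurableSet_le measurable_fst measurable_const)
    (hG.comp (measurable_fst.inv.mul measurable_snd)) measurable_const

lemma ballKernel_polarCoord_symm {ρ : ℝ} (hρ : 0 < ρ) (θ : ℝ) :
    ballKernel R G √((ρ * cos θ) ^ 2 + (ρ * sin θ) ^ 2) (ρ * cos θ) =
      if ρ ≤ R then G (cos θ) else 0 := by
  have : (ρ * cos θ) ^ 2 + (ρ * sin θ) ^ 2 = ρ ^ 2 := by
    linear_combination ρ ^ 2 * cos_sq_add_sin_sq θ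
  rw [ballKernel, this, sqrt_sq hρ.le, inv_mul_cancel_left₀ hρ.ne']

lemma integral_ballKernel_one {E : Type*} [NormedAddCommGroup E] [MeasurableSpace E]
    [OpensMeasurableSpace E] (μ : Measure E) (f : E → ℝ) :
    ∫ u, ballKernel R (fun _ => 1) ‖u‖ (f u) ∂μ = μ.real (closedBall 0 R) := by
  rw [← integral_indicator_one measurableSet_closedBall]
  congr 1 with u
  by_cases h : ‖u‖ ≤ R <;> simp [ballKernel, h]

lemma integrable_ballKernel_prod {F : Type*} [NormedAddCommGroup F] [ProperSpace F]
    [MeasurableSpace F] [OpensMeasurableSpace F] {μ : Measure F} [IsFiniteMeasureOnCompacts μ]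
    (hG : Measurable G) (hC : ∀ t, ‖G t‖ ≤ C) :
    Integrable (fun p : ℝ × F => ballKernel R G √(p.1 ^ 2 + ‖p.2‖ ^ 2) p.1) (volume.prod μ) := by
  have hm : Measurable fun p : ℝ × F => ballKernel R G √(p.1 ^ 2 + ‖p.2‖ ^ 2) p.1 :=
    (measurable_ballKernel hG).comp (((measurable_fst.pow_const 2).add
      (measurable_snd.norm.pow_const 2)).sqrt.prodMk measurable_fst)
  refine integrable_of_norm_le_of_forall_notMem_eq_zero (s := closedBall 0 R)
    measurableSet_closedBall measure_closedBall_lt_top.ne hm.aestronglyMeasurable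
    (fun p _ => norm_ballKernel_le hC _ _) (fun p hp => ballKernel_of_lt ?_ _)
  rw [mem_closedBall_zero_iff, not_le] at hp
  simpa [Real.norm_eq_abs, sq_abs] using hp.trans_le (Prod.norm_le_sqrt_sq_add_sq p)

lemma integrableOn_pow_mul_ballKernel (k : ℕ) (hG : Measurable G) (hC : ∀ t, ‖G t‖ ≤ C) :
    IntegrableOn (fun p : ℝ × ℝ => p.2 ^ k * ballKernel R G √(p.1 ^ 2 + p.2 ^ 2) p.1)
      (univ ×ˢ Ioi 0) := by
  have hm : MeasurableSet (univ ×ˢ Ioi 0 : Set (ℝ × ℝ)) :=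
    MeasurableSet.univ.prod measurableSet_Ioi
  rw [← integrable_indicator_iff hm]
  refine integrable_of_norm_le_of_forall_notMem_eq_zero (s := closedBall 0 R) (C := R ^ k * C)
    measurableSet_closedBall measure_closedBall_lt_top.ne
    (((measurable_snd.pow_const k).mul ((measurable_ballKernel hG).comp
      (((measurable_fst.pow_const 2).add (measurable_snd.pow_const 2)).sqrt.prodMk
        measurable_fst))).indicator hm).aestronglyMeasurable (fun p hp => ?_) (fun p hp => ?_)
  · have hR : 0 ≤ R := (norm_nonneg p).trans (mem_closedBall_zero_iff.1 hp)
    by_cases hp2 : p ∈ univ ×ˢ Ioi 0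
    · have h2 : 0 < p.2 := hp2.2
      have h2R : p.2 ≤ R :=
        (le_abs_self _).trans ((norm_snd_le p).trans (mem_closedBall_zero_iff.1 hp))
      rw [indicator_of_mem hp2, norm_mul, norm_pow, Real.norm_of_nonneg h2.le]
      exact mul_le_mul (pow_le_pow_left₀ h2.le h2R k) (norm_ballKernel_le hC _ _)
        (norm_nonneg _) (pow_nonneg hR k)
    · rw [indicator_of_notMem hp2, norm_zero]
      exact mul_nonneg (pow_nonneg hR k) ((norm_nonneg _).trans (hC 0))
  · refine indicator_apply_eq_zero.2 fun _ => mul_eq_zero_of_right _ (ballKernel_of_lt ?_ _)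
    rw [mem_closedBall_zero_iff, not_le] at hp
    simpa [Real.norm_eq_abs, sq_abs] using hp.trans_le (Prod.norm_le_sqrt_sq_add_sq p)

lemma smul_indicator_pow_mul_ballKernel_polarCoord_symm (k : ℕ) {p : ℝ × ℝ}
    (hp : p ∈ polarCoord.target) :
    p.1 • (univ ×ˢ Ioi 0).indicator
        (fun q : ℝ × ℝ => q.2 ^ k * ballKernel R G √(q.1 ^ 2 + q.2 ^ 2) q.1) (polarCoord.symm p) =
      (Ioc 0 R).indicator (· ^ (k + 1)) p.1 *
        (Ioo 0 π).indicator (fun θ => sin θ ^ k * G (cos θ)) p.2 := by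
  obtain ⟨ρ, θ⟩ := p
  obtain ⟨hρ, hθ⟩ := hp
  simp only [polarCoord_symm_apply, smul_eq_mul]
  by_cases hθ0 : θ ∈ Ioo 0 π
  · have hmem : (ρ * cos θ, ρ * sin θ) ∈ univ ×ˢ Ioi 0 :=
      ⟨trivial, mul_pos hρ (sin_pos_of_pos_of_lt_pi hθ0.1 hθ0.2)⟩
    rw [indicator_of_mem hmem, indicator_of_mem hθ0, ballKernel_polarCoord_symm hρ]
    by_cases hρR : ρ ≤ R
    · rw [if_pos hρR, indicator_of_mem (show ρ ∈ Ioc 0 R from ⟨hρ, hρR⟩)]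
      ring
    · rw [if_neg hρR, indicator_of_notMem (show ρ ∉ Ioc 0 R from fun h => hρR h.2)]
      ring
  · have hsin : sin θ ≤ 0 :=
      sin_nonpos_of_nonpos_of_neg_pi_le (not_lt.1 fun h => hθ0 ⟨h, hθ.2⟩) hθ.1.le
    have hnot : (ρ * cos θ, ρ * sin θ) ∉ univ ×ˢ Ioi 0 :=
      fun h => (mul_nonpos_of_nonneg_of_nonpos hρ.le hsin).not_gt h.2
    rw [indicator_of_notMem hnot, indicator_of_notMem hθ0]
    ring

lemma integral_integral_Ioi_pow_mul_ballKernel (k : ℕ) (hG : Measurable G)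
    (hC : ∀ t, ‖G t‖ ≤ C) :
    ∫ t, ∫ r in Ioi 0, r ^ k * ballKernel R G √(t ^ 2 + r ^ 2) t =
      (∫ ρ in Ioc 0 R, ρ ^ (k + 1)) * ∫ θ in 0..π, sin θ ^ k * G (cos θ) := by
  set Q : ℝ × ℝ → ℝ := fun p => p.2 ^ k * ballKernel R G √(p.1 ^ 2 + p.2 ^ 2) p.1
  set A : ℝ → ℝ := (Ioc 0 R).indicator (· ^ (k + 1))
  set B : ℝ → ℝ := (Ioo 0 π).indicator fun θ => sin θ ^ k * G (cos θ)
  have hvanish : ∀ p ∉ polarCoord.target, A p.1 * B p.2 = 0 := by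
    rintro ⟨ρ, θ⟩ hp
    rcases not_and_or.1 hp with hρ | hθ
    · exact mul_eq_zero_of_left (indicator_of_notMem (fun h => hρ h.1) _) _
    · refine mul_eq_zero_of_right _ (indicator_of_notMem (fun h => hθ ?_) _)
      exact ⟨by linarith [pi_pos, h.1], h.2⟩
  calc ∫ t, ∫ r in Ioi 0, r ^ k * ballKernel R G √(t ^ 2 + r ^ 2) t
      = ∫ p in univ ×ˢ Ioi 0, Q p := by
        rw [Measure.volume_eq_prod, setIntegral_prod _ (integrableOn_pow_mul_ballKernel k hG hC),
          Measure.restrict_univ]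
    _ = ∫ p, (univ ×ˢ Ioi 0).indicator Q p :=
        (integral_indicator (MeasurableSet.univ.prod measurableSet_Ioi)).symm
    _ = ∫ p in polarCoord.target, p.1 • (univ ×ˢ Ioi 0).indicator Q (polarCoord.symm p) :=
        (integral_comp_polarCoord_symm _).symm
    _ = ∫ p in polarCoord.target, A p.1 * B p.2 :=
        setIntegral_congr_fun polarCoord.open_target.measurableSet
          fun p hp => smul_indicator_pow_mul_ballKernel_polarCoord_symm k hp
    _ = ∫ p : ℝ × ℝ, A p.1 * B p.2 := setIntegral_eq_integral_of_forall_compl_eq_zero hvanish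
    _ = (∫ ρ, A ρ) * ∫ θ, B θ := by rw [Measure.volume_eq_prod, integral_prod_mul A B]
    _ = _ := by
        rw [integral_indicator measurableSet_Ioc, integral_indicator measurableSet_Ioo,
          intervalIntegral.integral_of_le pi_pos.le, integral_Ioc_eq_integral_Ioo (y := π)]

lemma integral_ballKernel_inner_of_norm_eq_one (k : ℕ) (hG : Measurable G) (hC : ∀ t, ‖G t‖ ≤ C)
    {w : EuclideanSpace ℝ (Fin (k + 2))} (hw : ‖w‖ = 1) :
    ∫ u, ballKernel R G ‖u‖ (inner ℝ u w) =
      ((k + 1) * volume.real (ball (0 : EuclideanSpace ℝ (Fin (k + 1))) 1) *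
        ∫ ρ in Ioc 0 R, ρ ^ (k + 1)) * ∫ θ in 0..π, sin θ ^ k * G (cos θ) := by
  have hw₀ : ‖w‖ = ‖EuclideanSpace.single (0 : Fin (k + 2)) (1 : ℝ)‖ := by simp [hw]
  rw [integral_comp_norm_inner_eq_of_norm_eq _ hw₀]
  simp only [EuclideanSpace.inner_single_right, one_mul, conj_trivial]
  rw [EuclideanSpace.integral_comp_norm_apply_zero, Measure.volume_eq_prod,
    integral_prod_comp_norm_snd volume (fun t r => ballKernel R G √(t ^ 2 + r ^ 2) t)
      (integrable_ballKernel_prod hG hC),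
    finrank_euclideanSpace_fin, Nat.add_sub_cancel,
    integral_integral_Ioi_pow_mul_ballKernel k hG hC]
  push_cast
  ring

end ballKernel

lemma ContinuousOn.exists_continuous_bounded_eqOn_Icc {a b : ℝ} (hab : a ≤ b) {g : ℝ → ℝ}
    (hg : ContinuousOn g (Icc a b)) :
    ∃ G : ℝ → ℝ, Continuous G ∧ (∃ C, ∀ t, ‖G t‖ ≤ C) ∧ EqOn G g (Icc a b) := by
  obtain ⟨C, hC⟩ := isCompact_Icc.exists_bound_of_continuousOn hg
  exact ⟨IccExtend hab fun t => g t,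
    continuous_IccExtend_iff.2 (hg.comp_continuous continuous_subtype_val Subtype.prop),
    ⟨C, fun t => hC _ (projIcc a b hab t).2⟩, fun t ht => IccExtend_of_mem _ _ ht⟩

lemma inner_norm_inv_smul_mem_Icc {E : Type*} [NormedAddCommGroup E] [InnerProductSpace ℝ E]
    (a b : E) : inner ℝ (‖a‖⁻¹ • a) (‖b‖⁻¹ • b) ∈ Icc (-1 : ℝ) 1 := by
  rw [real_inner_smul_left, real_inner_smul_right, mem_Icc, ← abs_le]
  simpa [div_eq_inv_mul, mul_assoc, mul_comm, mul_left_comm] using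
    abs_real_inner_div_norm_mul_norm_le_one a b

section Lens

variable {E : Type*} [NormedAddCommGroup E] [InnerProductSpace ℝ E] [FiniteDimensional ℝ E]
  [MeasurableSpace E] [BorelSpace E] {R C : ℝ} {G : ℝ → ℝ}

/-- The integrand of `F x y` as a function of `(x, z)`, supported on the lens
`z ∈ B_R(x) ∩ B_R(y)`. -/
noncomputable def lensIntegrand (R : ℝ) (G : ℝ → ℝ) (y : E) : E × E → ℝ :=
  {p : E × E | p.2 ∈ closedBall p.1 R ∩ closedBall y R}.indicator
    fun p => G (inner ℝ (‖p.1 - p.2‖⁻¹ • (p.1 - p.2)) (‖y - p.2‖⁻¹ • (y - p.2)))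

lemma integrable_lensIntegrand (hG : Measurable G) (hC : ∀ t, ‖G t‖ ≤ C) (y : E) :
    Integrable (lensIntegrand R G y) (volume.prod volume) := by
  have hS : MeasurableSet {p : E × E | p.2 ∈ closedBall p.1 R ∩ closedBall y R} :=
    (measurableSet_le (measurable_snd.dist measurable_fst) measurable_const).inter
      (measurableSet_le (measurable_snd.dist measurable_const) measurable_const)
  have hm : Measurable fun p : E × E =>
      G (inner ℝ (‖p.1 - p.2‖⁻¹ • (p.1 - p.2)) (‖y - p.2‖⁻¹ • (y - p.2))) := by
    fun_prop
  refine integrable_of_norm_le_of_forall_notMem_eq_zero (s := closedBall (y, y) (2 * R))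
    measurableSet_closedBall measure_closedBall_lt_top.ne (hm.indicator hS).aestronglyMeasurable
    (fun p _ => (norm_indicator_le_norm_self _ _).trans (hC _)) (fun p hp => ?_)
  refine indicator_of_notMem (fun hpS => hp ?_) _
  obtain ⟨hx, hy⟩ := hpS
  rw [mem_closedBall] at hx hy ⊢
  rw [Prod.dist_eq, max_le_iff]
  exact ⟨by linarith [dist_triangle p.1 p.2 y, dist_comm p.1 p.2],
    by linarith [dist_nonneg (x := p.2) (y := p.1)]⟩

lemma integral_lensIntegrand_slice {y z w : E} (hzy : z ≠ y) (hw : ‖w‖ = 1) :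
    ∫ x, lensIntegrand R G y (x, z) =
      (closedBall y R).indicator (fun _ => ∫ u, ballKernel R G ‖u‖ (inner ℝ u w)) z := by
  by_cases hz : z ∈ closedBall y R
  · have hz' : ‖y - z‖ ≤ R := by rwa [mem_closedBall', dist_eq_norm] at hz
    have hslice : ∀ x, lensIntegrand R G y (x, z) =
        ballKernel R G ‖x - z‖ (inner ℝ (x - z) (‖y - z‖⁻¹ • (y - z))) := fun x => by
      simp only [lensIntegrand, indicator_apply, mem_ofPred_eq, mem_inter_iff, mem_closedBall',
        dist_eq_norm, hz', and_true, ballKernel, real_inner_smul_left]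
    have hnorm : ‖‖y - z‖⁻¹ • (y - z)‖ = ‖w‖ := by
      rw [hw, norm_smul, norm_inv, norm_norm,
        inv_mul_cancel₀ (norm_ne_zero_iff.2 (sub_ne_zero.2 hzy.symm))]
    rw [indicator_of_mem hz, integral_congr_ae (ae_of_all _ hslice),
      integral_sub_right_eq_self (fun u => ballKernel R G ‖u‖ (inner ℝ u _)) z,
      integral_comp_norm_inner_eq_of_norm_eq _ hnorm]
  · rw [indicator_of_notMem hz]
    exact integral_eq_zero_of_ae (ae_of_all _ fun x => indicator_of_notMem (fun h => hz h.2) _)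

lemma integral_setIntegral_closedBall_inter (hG : Measurable G) (hC : ∀ t, ‖G t‖ ≤ C) (y : E)
    {w : E} (hw : ‖w‖ = 1) :
    ∫ x, ∫ z in closedBall x R ∩ closedBall y R,
        G (inner ℝ (‖x - z‖⁻¹ • (x - z)) (‖y - z‖⁻¹ • (y - z))) =
      volume.real (closedBall (0 : E) R) * ∫ u, ballKernel R G ‖u‖ (inner ℝ u w) := by
  have : Nontrivial E := nontrivial_of_ne w 0 (norm_ne_zero_iff.1 (by simp [hw]))
  calc ∫ x, ∫ z in closedBall x R ∩ closedBall y R,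
          G (inner ℝ (‖x - z‖⁻¹ • (x - z)) (‖y - z‖⁻¹ • (y - z)))
      = ∫ x, ∫ z, lensIntegrand R G y (x, z) := by
        congr 1 with x
        exact (integral_indicator (measurableSet_closedBall.inter measurableSet_closedBall)).symm
    _ = ∫ z, ∫ x, lensIntegrand R G y (x, z) :=
        integral_integral_swap (integrable_lensIntegrand hG hC y)
    _ = ∫ z, (closedBall y R).indicator (fun _ => ∫ u, ballKernel R G ‖u‖ (inner ℝ u w)) z := by
        refine integral_congr_ae ?_
        filter_upwards [compl_mem_ae_iff.2 (measure_singleton y)] with z hz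
          using integral_lensIntegrand_slice hz hw
    _ = volume.real (closedBall (0 : E) R) * ∫ u, ballKernel R G ‖u‖ (inner ℝ u w) := by
        rw [integral_indicator_const _ measurableSet_closedBall, smul_eq_mul, measureReal_def,
          measureReal_def, Measure.addHaar_closedBall_center]

end Lens

theorem kernel_integral_eq_vol_sq_mul_avg_general
    (n : ℕ) (hn : 2 ≤ n) (R : ℝ)
    (g : ℝ → ℝ) (hg_cont : ContinuousOn g (Set.Icc (-1) 1))
    (F : EuclideanSpace ℝ (Fin n) → EuclideanSpace ℝ (Fin n) → ℝ)
    (hF : ∀ x y, F x y = ∫ z in closedBall x R ∩ closedBall y R,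
      g (inner ℝ (‖x - z‖⁻¹ • (x - z)) (‖y - z‖⁻¹ • (y - z)))) :
    ∀ y : EuclideanSpace ℝ (Fin n),
      ∫ x, F x y =
        (volume (closedBall (0 : EuclideanSpace ℝ (Fin n)) R)).toReal ^ 2 * sphereAvg n g := by
  obtain ⟨k, rfl⟩ : ∃ k, n = k + 2 := ⟨n - 2, by omega⟩
  intro y
  obtain ⟨G, hG, ⟨C, hC⟩, hGg⟩ := hg_cont.exists_continuous_bounded_eqOn_Icc (by norm_num)
  have hFG : ∀ x, F x y = ∫ z in closedBall x R ∩ closedBall y R,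
      G (inner ℝ (‖x - z‖⁻¹ • (x - z)) (‖y - z‖⁻¹ • (y - z))) := fun x => by
    simp only [hF, hGg (inner_norm_inv_smul_mem_Icc _ _)]
  have hGcos : ∀ θ, sin θ ^ k * G (cos θ) = sin θ ^ k * g (cos θ) := fun θ => by
    rw [hGg ⟨neg_one_le_cos θ, cos_le_one θ⟩]
  have hw : ‖EuclideanSpace.single (0 : Fin (k + 2)) (1 : ℝ)‖ = 1 := by simp
  have hvol := integral_ballKernel_inner_of_norm_eq_one k (R := R) measurable_const
    (fun _ => (norm_one (α := ℝ)).le) hw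
  simp only [integral_ballKernel_one, mul_one] at hvol
  have hsin := integral_sin_pow_pos k
  rw [integral_congr_ae (ae_of_all _ hFG),
    integral_setIntegral_closedBall_inter hG.measurable hC y hw,
    integral_ballKernel_inner_of_norm_eq_one k hG.measurable hC hw, sphereAvg_add_two,
    ← measureReal_def, hvol]
  simp only [hGcos]
  field_simp

theorem kernel_integral_eq_vol_sq_mul_avg
    (n : ℕ) (hn : 2 ≤ n) (R : ℝ) (hR : 0 < R)
    (g : ℝ → ℝ) (hg_cont : ContinuousOn g (Set.Icc (-1) 1))
    (F : EuclideanSpace ℝ (Fin n) → EuclideanSpace ℝ (Fin n) → ℝ)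
    (hF : ∀ x y, F x y = ∫ z in closedBall x R ∩ closedBall y R,
      g (inner ℝ (‖x - z‖⁻¹ • (x - z)) (‖y - z‖⁻¹ • (y - z)))) :
    ∀ y : EuclideanSpace ℝ (Fin n),
      ∫ x, F x y =
        (volume (closedBall (0 : EuclideanSpace ℝ (Fin n)) R)).toReal ^ 2 * sphereAvg n g :=
  kernel_integral_eq_vol_sq_mul_avg_general n hn R g hg_cont F hF
end

section
/- For every integer n ≥ 2, the function r ↦ (∫₀^r sinh^{n−1} x dx)/sinh^{n−1}(r) is monotonically increasing on (0,∞). -/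
/-! Put `m = n - 1 ≥ 1`, `F r = ∫₀^r sinh^m` and `G r = sinh^m r`, so that `F 0 = G 0 = 0` and
`F' / G' = tanh / m` is strictly increasing on `(0, ∞)`. This passes to `F / G` (the monotone form
of l'Hôpital's rule): Cauchy's mean value theorem gives `F r / G r = F' c / G' c < F' r / G' r`
for some `c ∈ (0, r)`, which is exactly the positivity of `(F / G)' = (F' G - F G') / G²`. -/

open Real Set

section MonotoneLHopital

variable {f g f' g' : ℝ → ℝ} {a : ℝ}

lemma pos_of_hasDerivAt_pos_of_eq_zero (hgc : ContinuousOn g (Ici a))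
    (hg : ∀ x ∈ Ioi a, HasDerivAt g (g' x) x) (hga : g a = 0) (hg' : ∀ x ∈ Ioi a, 0 < g' x)
    {x : ℝ} (hx : a < x) : 0 < g x := by
  have hmono : StrictMonoOn g (Ici a) := by
    refine strictMonoOn_of_hasDerivWithinAt_pos (f' := g') (convex_Ici a) hgc ?_ ?_ <;>
      rw [interior_Ici]
    · exact fun y hy => (hg y hy).hasDerivWithinAt
    · exact hg'
  simpa [hga] using hmono (mem_Ici.2 le_rfl) hx.le hx

lemma div_lt_deriv_div_deriv_of_strictMonoOn (hfc : ContinuousOn f (Ici a))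
    (hgc : ContinuousOn g (Ici a)) (hf : ∀ x ∈ Ioi a, HasDerivAt f (f' x) x)
    (hg : ∀ x ∈ Ioi a, HasDerivAt g (g' x) x) (hfa : f a = 0) (hga : g a = 0)
    (hg' : ∀ x ∈ Ioi a, 0 < g' x) (hmono : StrictMonoOn (fun x => f' x / g' x) (Ioi a))
    {x : ℝ} (hx : a < x) : f x / g x < f' x / g' x := by
  obtain ⟨c, hc, hcauchy⟩ := exists_ratio_hasDerivAt_eq_ratio_slope f f' hx
    (hfc.mono Icc_subset_Ici_self) (fun y hy => hf y hy.1) g g'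
    (hgc.mono Icc_subset_Ici_self) (fun y hy => hg y hy.1)
  rw [hfa, hga, sub_zero, sub_zero] at hcauchy
  have hgx := pos_of_hasDerivAt_pos_of_eq_zero hgc hg hga hg' hx
  calc f x / g x = f' c / g' c := by
        rw [div_eq_div_iff hgx.ne' (hg' c hc.1).ne']; linarith
    _ < f' x / g' x := hmono hc.1 hx hc.2

theorem strictMonoOn_div_of_strictMonoOn_deriv_div (hfc : ContinuousOn f (Ici a))
    (hgc : ContinuousOn g (Ici a)) (hf : ∀ x ∈ Ioi a, HasDerivAt f (f' x) x)
    (hg : ∀ x ∈ Ioi a, HasDerivAt g (g' x) x) (hfa : f a = 0) (hga : g a = 0)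
    (hg' : ∀ x ∈ Ioi a, 0 < g' x) (hmono : StrictMonoOn (fun x => f' x / g' x) (Ioi a)) :
    StrictMonoOn (fun x => f x / g x) (Ioi a) := by
  have hgpos : ∀ x ∈ Ioi a, 0 < g x := fun x hx =>
    pos_of_hasDerivAt_pos_of_eq_zero hgc hg hga hg' hx
  have hquot : ∀ x ∈ Ioi a, HasDerivAt (fun x => f x / g x)
      ((f' x * g x - f x * g' x) / g x ^ 2) x := fun x hx =>
    (hf x hx).div (hg x hx) (hgpos x hx).ne'
  refine strictMonoOn_of_hasDerivWithinAt_pos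
    (f' := fun x => (f' x * g x - f x * g' x) / g x ^ 2) (convex_Ioi a)
    (fun x hx => (hquot x hx).continuousAt.continuousWithinAt) ?_ ?_ <;> rw [interior_Ioi]
  · exact fun x hx => (hquot x hx).hasDerivWithinAt
  · intro x hx
    have hlt := div_lt_deriv_div_deriv_of_strictMonoOn hfc hgc hf hg hfa hga hg' hmono hx
    rw [div_lt_div_iff₀ (hgpos x hx) (hg' x hx)] at hlt
    exact div_pos (by linarith) (pow_pos (hgpos x hx) 2)

end MonotoneLHopital

theorem Real.tanh_strictMono : StrictMono tanh := fun x y hxy => by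
  rw [← artanh_lt_artanh_iff (tanh_bijOn.mapsTo (mem_univ x)) (tanh_bijOn.mapsTo (mem_univ y)),
    artanh_tanh, artanh_tanh]
  exact hxy

lemma Real.hasDerivAt_sinh_pow_succ (k : ℕ) (x : ℝ) :
    HasDerivAt (fun x => sinh x ^ (k + 1)) ((k + 1) * sinh x ^ k * cosh x) x := by
  simpa using (hasDerivAt_sinh x).fun_pow (k + 1)

lemma Real.sinh_pow_succ_div_eq_tanh_div {x : ℝ} (hx : sinh x ≠ 0) (k : ℕ) :
    sinh x ^ (k + 1) / ((k + 1) * sinh x ^ k * cosh x) = tanh x / (k + 1) := by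
  rw [tanh_eq_sinh_div_cosh]
  field_simp
  ring

theorem strictMonoOn_integral_sinh_pow_succ_div (k : ℕ) :
    StrictMonoOn (fun r : ℝ => (∫ x in (0 : ℝ)..r, sinh x ^ (k + 1)) / sinh r ^ (k + 1))
      (Ioi 0) := by
  have hcont : Continuous fun x => sinh x ^ (k + 1) := continuous_sinh.pow (k + 1)
  refine strictMonoOn_div_of_strictMonoOn_deriv_div
    (fun x _ => (hcont.integral_hasStrictDerivAt 0 x).hasDerivAt.continuousAt.continuousWithinAt)
    hcont.continuousOn (fun x _ => (hcont.integral_hasStrictDerivAt 0 x).hasDerivAt)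
    (fun x _ => hasDerivAt_sinh_pow_succ k x) (by simp) (by simp) (fun x hx => ?_) ?_
  · have := sinh_pos_iff.2 hx
    positivity
  · refine (tanh_strictMono.div_const (c := (k : ℝ) + 1) (by positivity)).strictMonoOn _
      |>.congr fun x hx => ?_
    exact (sinh_pow_succ_div_eq_tanh_div (sinh_pos_iff.2 hx).ne' k).symm

theorem sinh_integral_div_sinh_pow_pred_strictMono
    (n : ℕ) (hn : 2 ≤ n) :
    StrictMonoOn
      (fun r : ℝ => (∫ x in (0 : ℝ)..r, Real.sinh x ^ (n - 1)) / Real.sinh r ^ (n - 1))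
      (Set.Ioi 0) := by
  obtain ⟨k, hk⟩ : ∃ k, n - 1 = k + 1 := ⟨n - 2, by omega⟩
  rw [hk]
  exact strictMonoOn_integral_sinh_pow_succ_div k
end
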